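/- arXiv:1106.5756 — 2 statements merged into one kernel-verified Lean document; each statement's English description precedes it below -/
import Mathlib

section
/- Let ρ be a pure 4-qubit state that is a product across a 1-versus-3 bipartition, i.e. (up to the corresponding reordering of tensor factors) ρ = |φ⟩⟨φ| ⊗ |χ⟩⟨χ| with φ ∈ ℂ² and χ ∈ (ℂ²)^{⊗3} unit vectors. Then for every pair A = {j,l} ⊂ {1,2,3,4} and every k ∈ {1,…,9}, the A-matricization of the full correlation tensor T_{i₁i₂i₃i₄} = tr(ρ (σ_{i₁} ⊗ σ_{i₂} ⊗ σ_{i₃} ⊗ σ_{i₄})) satisfies ‖T_{\underline{A}}‖_k ≤ 2√k if k ≤ 3 and ‖T_{\underline{A}}‖_k ≤ 2√3 if k ≥ 4. -/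
open Matrix BigOperators ComplexOrder

noncomputable section

/-- The three standard Pauli matrices. -/
def pauli : Fin 3 → Matrix (Fin 2) (Fin 2) ℂ :=
  ![!![0, 1; 1, 0], !![0, -Complex.I; Complex.I, 0], !![1, 0; 0, -1]]

/-- The tensor (Kronecker) product of `n` local operators, acting on
`(ℂ²)^{⊗n}` with the Hilbert space indexed by functions `Fin n → Fin 2`. -/
def tensorOp {n : ℕ} (A : Fin n → Matrix (Fin 2) (Fin 2) ℂ) :
    Matrix (Fin n → Fin 2) (Fin n → Fin 2) ℂ :=
  fun r c => ∏ j, A j (r j) (c j)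

/-- The full correlation tensor of an `n`-qubit state:
`T_{i₁⋯i_n} = tr(ρ (σ_{i₁} ⊗ ⋯ ⊗ σ_{i_n}))`. -/
def corr {n : ℕ} (ρ : Matrix (Fin n → Fin 2) (Fin n → Fin 2) ℂ)
    (f : Fin n → Fin 3) : ℝ :=
  ((ρ * tensorOp fun j => pauli (f j)).trace).re

/-- The `A`-matricization of an `n`-index tensor `v`: the real matrix whose row
index collects the indices in `A` and whose column index collects the remaining
indices. -/
def matricize {n m : ℕ} (A : Finset (Fin n)) (v : (Fin n → Fin m) → ℝ) :
    Matrix ({j // j ∈ A} → Fin m) ({j // j ∉ A} → Fin m) ℝ :=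
  fun r c => v fun j => if h : j ∈ A then r ⟨j, h⟩ else c ⟨j, h⟩

/-- The singular values of a real matrix `M`: the square roots of the
eigenvalues of `MᵀM = MᴴM`. -/
def singVals {I J : Type*} [Fintype I] [Fintype J] [DecidableEq J]
    (M : Matrix I J ℝ) : J → ℝ :=
  fun j => Real.sqrt ((Matrix.posSemidef_conjTranspose_mul_self M).1.eigenvalues j)

/-- The Ky Fan `k` norm: the maximum, over sets of `k` of the singular values,
of their sum — equivalently, the sum of the `k` largest singular values. -/
def kyFanNorm {I J : Type*} [Fintype I] [Fintype J] [DecidableEq J]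
    (k : ℕ) (M : Matrix I J ℝ) : ℝ :=
  (Finset.univ : Finset (Finset J)).sup' ⟨∅, Finset.mem_univ ∅⟩
    fun s => if s.card = k then ∑ j ∈ s, singVals M j else 0

/-- The trace norm: the sum of all singular values. -/
def traceNorm {I J : Type*} [Fintype I] [Fintype J] [DecidableEq J]
    (M : Matrix I J ℝ) : ℝ :=
  ∑ j, singVals M j

/-!
Since the state is a product, its correlation tensor is the outer product `a ⊗ S` of the Bloch
vector `a` of `φ`, a unit vector, and the correlation tensor `S` of the three-qubit state `χ`.
For a pure three-qubit state, `∑ S² = 4 - ∑ₜ |bₜ|²`, where `bₜ` are the Bloch vectors of its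
one-qubit marginals, so every matricization of `a ⊗ S` has Frobenius norm at most `2`. One of
the two index groups of a matricization contains the index carried by `a`, together with only one
other index, so the matricization has rank at most `3`. By Cauchy–Schwarz, a sum of `k` singular
values is at most `√(min k rank)` times the Frobenius norm.
-/

open Finset

lemma Fin.sum_univ_fun_three {β M : Type*} [Fintype β] [AddCommMonoid M]
    (f : (Fin 3 → β) → M) : ∑ v, f v = ∑ a, ∑ b, ∑ c, f ![a, b, c] := by
  simp only [← (Fin.consEquiv fun _ => β).sum_comp, Fintype.sum_prod_type, Fintype.sum_unique]
  rfl

lemma sum_eval_mul_restrict {ι β R : Type*} [Fintype ι] [DecidableEq ι] [Fintype β]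
    [CommSemiring R] (j : ι) (F : β → R) (G : ({l // l ≠ j} → β) → R) :
    ∑ f : ι → β, F (f j) * G (fun l => f l) = (∑ b, F b) * ∑ g, G g := by
  rw [sum_mul_sum, ← Fintype.sum_prod_type']
  exact Fintype.sum_equiv (Equiv.funSplitAt j β) _ _ fun f => rfl

lemma Matrix.rank_le_card_of_eq_mul {I J K R : Type*} [Fintype I] [Fintype J] [Fintype K]
    [CommRing R] [StrongRankCondition R] {M : Matrix I J R} (w : I → R) (q : I → K)
    (N : Matrix K J R) (h : ∀ r c, M r c = w r * N (q r) c) : M.rank ≤ Fintype.card K := by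
  classical
  have hM : M = diagonal w * N.submatrix q id := by
    ext r c
    simp [h]
  calc M.rank ≤ (N.submatrix q id).rank := hM ▸ rank_mul_le_right _ _
    _ ≤ N.rank := rank_submatrix_le N q id
    _ ≤ Fintype.card K := rank_le_card_height N

def blochVector (φ : Fin 2 → ℂ) (i : Fin 3) : ℝ :=
  (star φ ⬝ᵥ pauli i *ᵥ φ).re

lemma isHermitian_pauli (i : Fin 3) : (pauli i).IsHermitian := by
  ext x y
  fin_cases i <;> fin_cases x <;> fin_cases y <;> simp [pauli]

lemma sum_sq_blochVector (φ : Fin 2 → ℂ) :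
    ∑ i, blochVector φ i ^ 2 = (∑ x, Complex.normSq (φ x)) ^ 2 := by
  simp only [blochVector, dotProduct, mulVec, Fin.sum_univ_two, Fin.sum_univ_three,
    Complex.normSq_apply, pauli, Pi.star_apply, Complex.star_def]
  simp only [Fin.isValue, Matrix.cons_val_zero, of_apply, Matrix.cons_val',
    Matrix.cons_val_fin_one, zero_mul, Matrix.cons_val_one, one_mul, zero_add, add_zero,
    Complex.add_re, Complex.mul_re, Complex.conj_re, Complex.conj_im, neg_mul, sub_neg_eq_add,
    mul_neg, Complex.neg_re, Complex.I_re, Complex.I_im, zero_sub, Complex.mul_im, neg_add_rev,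
    neg_neg, Matrix.cons_val]
  ring

section PureCorrelations

variable {ι κ : Type*} [Fintype ι] [Fintype κ]

def pauliString (g : ι → Fin 3) : Matrix (ι → Fin 2) (ι → Fin 2) ℂ :=
  fun r c => ∏ l, pauli (g l) (r l) (c l)

lemma isHermitian_pauliString (g : ι → Fin 3) : (pauliString g).IsHermitian := by
  ext r c
  simp only [conjTranspose_apply, pauliString, star_prod]
  exact prod_congr rfl fun l _ => (isHermitian_pauli (g l)).apply (r l) (c l)

lemma pauliString_comp_equiv (e : ι ≃ κ) (g : κ → Fin 3) :
    pauliString (g ∘ e) =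
      (pauliString g).submatrix (e.arrowCongr (.refl _)) (e.arrowCongr (.refl _)) := by
  ext r c
  exact (e.symm.prod_comp _).symm.trans (by simp [pauliString])

variable [DecidableEq ι] [DecidableEq κ]

def pureCorr (ψ : (ι → Fin 2) → ℂ) (g : ι → Fin 3) : ℝ :=
  (star ψ ⬝ᵥ pauliString g *ᵥ ψ).re

lemma corr_vecMulVec {n : ℕ} (Ψ : (Fin n → Fin 2) → ℂ) (f : Fin n → Fin 3) :
    corr (vecMulVec Ψ (star Ψ)) f = pureCorr Ψ f := by
  rw [corr, pureCorr, vecMulVec_mul, trace_vecMulVec, dotProduct_comm, ← dotProduct_mulVec]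
  rfl

lemma pureCorr_comp_equiv (e : ι ≃ κ) (ψ : (κ → Fin 2) → ℂ) (g : κ → Fin 3) :
    pureCorr (ψ ∘ e.arrowCongr (.refl _)) (g ∘ e) = pureCorr ψ g := by
  rw [pureCorr, pureCorr, pauliString_comp_equiv, submatrix_mulVec_equiv, Function.comp_assoc,
    Equiv.self_comp_symm, Function.comp_id]
  exact congrArg Complex.re (comp_equiv_dotProduct_comp_equiv (star ψ) _ _)

lemma pauliString_apply_eq_mul (j : ι) (f : ι → Fin 3) (r c : ι → Fin 2) :
    pauliString f r c =
      pauli (f j) (r j) (c j) * pauliString (fun l : {l // l ≠ j} => f l) (fun l => r l)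
        (fun l => c l) :=
  Fintype.prod_eq_mul_prod_subtype_ne _ j

variable (j : ι) (φ : Fin 2 → ℂ) (χ : ({l // l ≠ j} → Fin 2) → ℂ) {Ψ : (ι → Fin 2) → ℂ}

lemma star_dotProduct_pauliString_mulVec_of_eq_mul (hΨ : ∀ r, Ψ r = φ (r j) * χ fun l => r l)
    (f : ι → Fin 3) :
    star Ψ ⬝ᵥ pauliString f *ᵥ Ψ = (star φ ⬝ᵥ pauli (f j) *ᵥ φ) *
      (star χ ⬝ᵥ pauliString (fun l : {l // l ≠ j} => f l) *ᵥ χ) := by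
  have hrow : ∀ r, (pauliString f *ᵥ Ψ) r = (pauli (f j) *ᵥ φ) (r j) *
      (pauliString (fun l : {l // l ≠ j} => f l) *ᵥ χ) (fun l => r l) := fun r => by
    simp only [mulVec, dotProduct, ← sum_eval_mul_restrict j]
    refine sum_congr rfl fun c _ => ?_
    rw [pauliString_apply_eq_mul j, hΨ]
    ring
  simp only [dotProduct, ← sum_eval_mul_restrict j, hrow, Pi.star_apply, hΨ, star_mul']
  refine sum_congr rfl fun r _ => ?_
  ring

lemma pureCorr_of_eq_mul (hΨ : ∀ r, Ψ r = φ (r j) * χ fun l => r l) (f : ι → Fin 3) :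
    pureCorr Ψ f = blochVector φ (f j) * pureCorr χ (fun l => f l) := by
  have hφ := (isHermitian_pauli (f j)).im_star_dotProduct_mulVec_self φ
  have hχ := (isHermitian_pauliString fun l : {l // l ≠ j} => f l).im_star_dotProduct_mulVec_self χ
  simp only [RCLike.im_to_complex] at hφ hχ
  rw [pureCorr, star_dotProduct_pauliString_mulVec_of_eq_mul j φ χ hΨ, Complex.mul_re, hφ, hχ,
    mul_zero, sub_zero]
  rfl

end PureCorrelations

lemma sum_sq_pureCorr_fin_three_le (χ : (Fin 3 → Fin 2) → ℂ) :
    ∑ g, pureCorr χ g ^ 2 ≤ 4 * (∑ x, Complex.normSq (χ x)) ^ 2 := by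
  set z : Fin 2 → Fin 2 → Fin 2 → ℂ := fun a b c => χ ![a, b, c]
  have hcorr : ∀ g : Fin 3 → Fin 3, pureCorr χ g = (∑ a, ∑ b, ∑ c, ∑ a', ∑ b', ∑ c',
      star (z a b c) * (pauli (g 0) a a' * pauli (g 1) b b' * pauli (g 2) c c') * z a' b' c').re :=
    fun g => by
    simp only [pureCorr, dotProduct, mulVec, Fin.sum_univ_fun_three, mul_sum, pauliString,
      Fin.prod_univ_three, Pi.star_apply]
    simp only [z, mul_assoc]
    rfl
  -- the Bloch vectors of the three one-qubit marginals
  set b₁ : Fin 3 → ℝ := fun i => (∑ a, ∑ a', ∑ b, ∑ c, star (z a b c) * pauli i a a' * z a' b c).re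
  set b₂ : Fin 3 → ℝ := fun i => (∑ b, ∑ b', ∑ a, ∑ c, star (z a b c) * pauli i b b' * z a b' c).re
  set b₃ : Fin 3 → ℝ := fun i => (∑ c, ∑ c', ∑ a, ∑ b, star (z a b c) * pauli i c c' * z a b c').re
  have hpurity : ∑ g, pureCorr χ g ^ 2 = 4 * (∑ x, Complex.normSq (χ x)) ^ 2 -
      ∑ i, (b₁ i ^ 2 + b₂ i ^ 2 + b₃ i ^ 2) := by
    rw [Fin.sum_univ_fun_three (fun g => pureCorr χ g ^ 2),
      Fin.sum_univ_fun_three (fun x => Complex.normSq (χ x))]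
    simp only [hcorr, b₁, b₂, b₃]
    simp only [Fin.sum_univ_three, Fin.sum_univ_two, Complex.normSq_apply, pauli, z,
      Matrix.cons_val_zero, Matrix.cons_val_one, Matrix.cons_val_two, of_apply, head_cons,
      tail_cons, Matrix.cons_val', empty_val', Matrix.cons_val_fin_one, Complex.star_def]
    simp only [Complex.add_re, Complex.mul_re, Complex.mul_im, Complex.conj_re, Complex.conj_im,
      Complex.I_re, Complex.I_im, Complex.neg_re, mul_zero, zero_mul, mul_one, one_mul, add_zero,
      zero_add, sub_zero, zero_sub, mul_neg, neg_mul, neg_neg, neg_zero]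
    ring
  have hmarginals : 0 ≤ ∑ i, (b₁ i ^ 2 + b₂ i ^ 2 + b₃ i ^ 2) :=
    sum_nonneg fun i _ => by positivity
  linarith

lemma sum_sq_pureCorr_le_of_card_eq_three {ι : Type*} [Fintype ι] [DecidableEq ι]
    (hι : Fintype.card ι = 3) (χ : (ι → Fin 2) → ℂ) :
    ∑ g, pureCorr χ g ^ 2 ≤ 4 * (∑ x, Complex.normSq (χ x)) ^ 2 := by
  set e : ι ≃ Fin 3 := Fintype.equivFinOfCardEq hι
  set E : (ι → Fin 2) ≃ (Fin 3 → Fin 2) := e.arrowCongr (.refl _)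
  have hχ : (χ ∘ E.symm) ∘ E = χ := by simp [Function.comp_assoc]
  calc ∑ g, pureCorr χ g ^ 2 = ∑ g : Fin 3 → Fin 3, pureCorr (χ ∘ E.symm) g ^ 2 :=
        Fintype.sum_equiv (e.arrowCongr (.refl _)) _ _ fun g => by
          rw [← pureCorr_comp_equiv e, hχ]
          congr 2
          ext
          simp
    _ ≤ 4 * (∑ x, Complex.normSq ((χ ∘ E.symm) x)) ^ 2 := sum_sq_pureCorr_fin_three_le _
    _ = 4 * (∑ x, Complex.normSq (χ x)) ^ 2 := by
        rw [Function.comp_def, E.symm.sum_comp (fun x => Complex.normSq (χ x))]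

section Matricization

variable {n m : ℕ}

lemma sum_sq_matricize (A : Finset (Fin n)) (v : (Fin n → Fin m) → ℝ) :
    ∑ r, ∑ c, matricize A v r c ^ 2 = ∑ f, v f ^ 2 := by
  rw [← Fintype.sum_prod_type']
  refine (Fintype.sum_equiv (Equiv.piEquivPiSubtypeProd (· ∈ A) fun _ => Fin m) _ _
    fun f => ?_).symm
  simp only [matricize]
  congr 2
  ext j
  split_ifs <;> rfl

lemma transpose_matricize (A : Finset (Fin n)) (v : (Fin n → Fin m) → ℝ) :
    (matricize A v)ᵀ = reindex
      ((Equiv.subtypeEquivRight fun _ => mem_compl).arrowCongr (.refl _))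
      ((Equiv.subtypeEquivRight fun _ => notMem_compl).arrowCongr (.refl _))
      (matricize Aᶜ v) := by
  ext c r
  simp only [transpose_apply, reindex_apply, submatrix_apply, matricize]
  congr 1
  ext j
  by_cases hj : j ∈ A <;> simp [hj] <;> rfl

lemma rank_matricize_compl (A : Finset (Fin n)) (v : (Fin n → Fin m) → ℝ) :
    (matricize Aᶜ v).rank = (matricize A v).rank := by
  rw [← rank_transpose (matricize A v), transpose_matricize, rank_reindex]

variable {j : Fin n} {a : Fin m → ℝ} {S : ({l // l ≠ j} → Fin m) → ℝ} {v : (Fin n → Fin m) → ℝ}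

lemma rank_matricize_le_of_mem (hv : ∀ f, v f = a (f j) * S fun l => f l) {A : Finset (Fin n)}
    (hj : j ∈ A) : (matricize A v).rank ≤ m ^ (#A - 1) := by
  have hcard : Fintype.card ({l // l ∈ A.erase j} → Fin m) = m ^ (#A - 1) := by
    rw [Fintype.card_fun, Fintype.card_coe, card_erase_of_mem hj, Fintype.card_fin]
  refine hcard ▸ Matrix.rank_le_card_of_eq_mul (fun r => a (r ⟨j, hj⟩))
    (fun r l => r ⟨l, mem_of_mem_erase l.2⟩)
    (fun k c => S fun l => if h : l.1 ∈ A then k ⟨l, mem_erase.2 ⟨l.2, h⟩⟩ else c ⟨l, h⟩)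
    fun r c => ?_
  simp only [matricize, hv, dif_pos hj]

lemma rank_matricize_le (hv : ∀ f, v f = a (f j) * S fun l => f l) (A : Finset (Fin n)) :
    (matricize A v).rank ≤ max (m ^ (#A - 1)) (m ^ (n - #A - 1)) := by
  by_cases hj : j ∈ A
  · exact (rank_matricize_le_of_mem hv hj).trans (le_max_left _ _)
  · rw [← rank_matricize_compl]
    refine (rank_matricize_le_of_mem hv (mem_compl.2 hj)).trans ?_
    simp [card_compl]

end Matricization

section SingularValues

variable {I J : Type*} [Fintype I] [Fintype J] [DecidableEq J] (M : Matrix I J ℝ)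

lemma sq_singVals (j : J) :
    singVals M j ^ 2 = (posSemidef_conjTranspose_mul_self M).1.eigenvalues j :=
  Real.sq_sqrt ((posSemidef_conjTranspose_mul_self M).eigenvalues_nonneg j)

lemma sum_sq_singVals : ∑ j, singVals M j ^ 2 = ∑ i, ∑ j, M i j ^ 2 := by
  have htrace := (posSemidef_conjTranspose_mul_self M).1.trace_eq_sum_eigenvalues
  simp only [RCLike.ofReal_real_eq_id, id] at htrace
  simp only [sq_singVals, ← htrace, trace, Matrix.diag, mul_apply, conjTranspose_apply,
    star_trivial, ← sq]
  exact sum_comm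

lemma card_singVals_ne_zero : #{j | singVals M j ≠ 0} = M.rank := by
  rw [← rank_conjTranspose_mul_self,
    (posSemidef_conjTranspose_mul_self M).1.rank_eq_card_non_zero_eigs, Fintype.card_subtype]
  congr 1
  ext j
  simp only [mem_filter, mem_univ, true_and, singVals, ne_eq, Real.sqrt_eq_zero', not_le]
  exact ((posSemidef_conjTranspose_mul_self M).eigenvalues_nonneg j).lt_iff_ne'

lemma sum_singVals_le (s : Finset J) :
    ∑ j ∈ s, singVals M j ≤ √(#{j ∈ s | singVals M j ≠ 0} : ℝ) * √(∑ i, ∑ j, M i j ^ 2) := by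
  rw [← Real.sqrt_mul (Nat.cast_nonneg _), ← sum_filter_ne_zero]
  refine Real.le_sqrt_of_sq_le ((sq_sum_le_card_mul_sum_sq ..).trans ?_)
  rw [← sum_sq_singVals]
  gcongr
  exact subset_univ _

lemma kyFanNorm_le {k n : ℕ} (h : k ≤ n ∨ M.rank ≤ n) :
    kyFanNorm k M ≤ √n * √(∑ i, ∑ j, M i j ^ 2) := by
  refine sup'_le _ _ fun s _ => ?_
  split_ifs with hs
  · refine (sum_singVals_le M s).trans ?_
    gcongr
    rcases h with hk | hr
    · exact (card_filter_le _ _).trans (hs ▸ hk)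
    · exact (card_le_card (filter_subset_filter _ (subset_univ s))).trans
        ((card_singVals_ne_zero M).trans_le hr)
  · positivity

end SingularValues

/-- If a pure 4-qubit state is a product across a 1-versus-3
bipartition `{j} | {j}ᶜ` (up to reordering of factors), then for every pair
`A ⊂ {1,2,3,4}` the `A`-matricization of the full correlation tensor satisfies
`‖T_{A̲}‖_k ≤ 2√k` for `k ≤ 3` and `‖T_{A̲}‖_k ≤ 2√3` for `4 ≤ k ≤ 9`. -/
theorem one_vs_three_product_four_qubit_matricization_bound
    (j : Fin 4) (φ : Fin 2 → ℂ) (χ : ({l // l ≠ j} → Fin 2) → ℂ)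
    (hφ : ∑ x, Complex.normSq (φ x) = 1)
    (hχ : ∑ x, Complex.normSq (χ x) = 1)
    (Ψ : (Fin 4 → Fin 2) → ℂ)
    (hprod : ∀ r, Ψ r = φ (r j) * χ (fun l => r l.1))
    (ρ : Matrix (Fin 4 → Fin 2) (Fin 4 → Fin 2) ℂ)
    (hρ : ρ = Matrix.vecMulVec Ψ (star Ψ)) :
    ∀ A : Finset (Fin 4), A.card = 2 →
      ∀ k : ℕ, 1 ≤ k → k ≤ 9 →
        (k ≤ 3 → kyFanNorm k (matricize A (corr ρ)) ≤ 2 * Real.sqrt k) ∧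
        (4 ≤ k → kyFanNorm k (matricize A (corr ρ)) ≤ 2 * Real.sqrt 3) := by
  have hT : ∀ f, corr ρ f = blochVector φ (f j) * pureCorr χ fun l => f l := fun f => by
    rw [hρ, corr_vecMulVec, pureCorr_of_eq_mul j φ χ hprod]
  have hfrob : ∑ f, corr ρ f ^ 2 ≤ 4 := calc
    ∑ f, corr ρ f ^ 2 = (∑ i, blochVector φ i ^ 2) * ∑ g, pureCorr χ g ^ 2 := by
      simp only [hT, mul_pow]
      exact sum_eval_mul_restrict j (fun i => blochVector φ i ^ 2) fun g => pureCorr χ g ^ 2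
    _ ≤ 4 := by
      rw [sum_sq_blochVector, hφ, one_pow, one_mul]
      simpa [hχ] using sum_sq_pureCorr_le_of_card_eq_three (by simp) χ
  intro A hA k _ _
  have hrank : (matricize A (corr ρ)).rank ≤ 3 := by
    simpa [hA] using rank_matricize_le hT A
  have hbound : ∀ n : ℕ, k ≤ n ∨ (matricize A (corr ρ)).rank ≤ n →
      kyFanNorm k (matricize A (corr ρ)) ≤ 2 * √n := fun n hn => by
    refine (kyFanNorm_le _ hn).trans ?_
    rw [sum_sq_matricize, mul_comm]
    gcongr
    exact (Real.sqrt_le_left zero_le_two).2 (by norm_num [hfrob])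
  exact ⟨fun _ => hbound k (.inl le_rfl), fun _ => hbound 3 (.inr hrank)⟩
end
end

section
/- Let ρ be a pure 4-qubit state that is a product across the 2-versus-2 bipartition {j,m}|{l,s}, i.e. (up to the corresponding reordering of tensor factors) ρ = |χ_{jm}⟩⟨χ_{jm}| ⊗ |χ_{ls}⟩⟨χ_{ls}| with χ_{jm}, χ_{ls} ∈ ℂ² ⊗ ℂ² unit vectors. Then the crossing {j,l}-matricization of the full correlation tensor T_{i₁i₂i₃i₄} = tr(ρ (σ_{i₁} ⊗ σ_{i₂} ⊗ σ_{i₃} ⊗ σ_{i₄})) satisfies ‖T_{\underline{\{j,l\}}}‖_k ≤ k for every k ∈ {1,…,9}. -/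
open Matrix BigOperators ComplexOrder

noncomputable section

/-! Since `Ψ = χ₁ ⊗ χ₂` across `{j,m} | {l,s}`, the correlation tensor factorises as
`T_{i₁i₂i₃i₄} = T¹_{i_j i_m} T²_{i_l i_s}`, with `T¹, T²` the two-qubit correlation matrices of
`χ₁, χ₂`; hence the crossing matricization is, up to reindexing rows and columns, the Kronecker
product `T¹ ⊗ T²`. Each `Tⁱ` is a contraction: `uᵀ T v = ⟨χ| (u·σ) ⊗ (v·σ) |χ⟩` and
`((u·σ) ⊗ (v·σ))² = |u|² |v|² · 1`, so Cauchy–Schwarz gives `|uᵀ T v| ≤ |u| |v|`. Kronecker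
products and reindexings of contractions are contractions, and all singular values of a
contraction are at most `1`, so its Ky Fan `k` norm is at most `k`. -/

open scoped Kronecker

namespace Matrix

variable {I J I' J' : Type*} [Fintype I] [Fintype J] [Fintype I'] [Fintype J']

def IsContraction (M : Matrix I J ℝ) : Prop :=
  ∀ x : J → ℝ, M *ᵥ x ⬝ᵥ M *ᵥ x ≤ x ⬝ᵥ x

theorem IsHermitian.eigenvalues_le_one [DecidableEq J] {A : Matrix J J ℝ} (hA : A.IsHermitian)
    (h : ∀ x, x ⬝ᵥ A *ᵥ x ≤ x ⬝ᵥ x) (q : J) : hA.eigenvalues q ≤ 1 := by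
  have hnorm := real_inner_self_eq_norm_sq (hA.eigenvectorBasis q)
  rw [hA.eigenvectorBasis.orthonormal.1 q, one_pow] at hnorm
  rw [hA.eigenvalues_eq, ← hnorm]
  exact h _

theorem IsContraction.singVals_le_one [DecidableEq J] {M : Matrix I J ℝ}
    (hM : M.IsContraction) (q : J) : singVals M q ≤ 1 := by
  refine Real.sqrt_le_one.mpr (IsHermitian.eigenvalues_le_one _ (fun x => ?_) q)
  rw [conjTranspose_eq_transpose_of_trivial, ← mulVec_mulVec, dotProduct_mulVec,
    vecMul_transpose]
  exact hM x

theorem IsContraction.kyFanNorm_le [DecidableEq J] {M : Matrix I J ℝ}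
    (hM : M.IsContraction) (k : ℕ) : kyFanNorm k M ≤ k := by
  refine Finset.sup'_le _ _ fun t _ => ?_
  split_ifs with ht
  · simpa [ht] using Finset.sum_le_sum fun q (_ : q ∈ t) => hM.singVals_le_one q
  · positivity

theorem isContraction_of_sq_le {M : Matrix I J ℝ}
    (h : ∀ u v, (u ⬝ᵥ M *ᵥ v) ^ 2 ≤ (u ⬝ᵥ u) * (v ⬝ᵥ v)) : M.IsContraction := fun v => by
  have hMv := h (M *ᵥ v) v
  have : 0 ≤ M *ᵥ v ⬝ᵥ M *ᵥ v := Finset.sum_nonneg fun i _ => mul_self_nonneg _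
  have : 0 ≤ v ⬝ᵥ v := Finset.sum_nonneg fun i _ => mul_self_nonneg _
  nlinarith

theorem IsContraction.submatrix {M : Matrix I J ℝ} (hM : M.IsContraction)
    (e : I' ≃ I) (f : J' ≃ J) : (M.submatrix e f).IsContraction := fun x => by
  rw [submatrix_mulVec_equiv, comp_equiv_dotProduct_comp_equiv,
    ← comp_equiv_dotProduct_comp_equiv x x f.symm]
  exact hM _

theorem IsContraction.kronecker {I₂ J₂ : Type*} [Fintype I₂] [Fintype J₂]
    {A : Matrix I J ℝ} {B : Matrix I₂ J₂ ℝ} (hA : A.IsContraction) (hB : B.IsContraction) :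
    (A ⊗ₖ B).IsContraction := fun x => by
  set z : I₂ → J → ℝ := fun b c => (B *ᵥ fun d => x (c, d)) b
  have hz : ∀ a b, ((A ⊗ₖ B) *ᵥ x) (a, b) = (A *ᵥ z b) a := fun a b => by
    simp only [z, mulVec, dotProduct, Fintype.sum_prod_type, kronecker_apply, Finset.mul_sum,
      mul_assoc]
  calc (A ⊗ₖ B) *ᵥ x ⬝ᵥ (A ⊗ₖ B) *ᵥ x = ∑ b, A *ᵥ z b ⬝ᵥ A *ᵥ z b := by
        simp only [dotProduct, Fintype.sum_prod_type, hz]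
        exact Finset.sum_comm
    _ ≤ ∑ b, z b ⬝ᵥ z b := Finset.sum_le_sum fun b _ => hA (z b)
    _ = ∑ c, (B *ᵥ fun d => x (c, d)) ⬝ᵥ (B *ᵥ fun d => x (c, d)) := by
        simp only [z, dotProduct]
        exact Finset.sum_comm
    _ ≤ ∑ c, (fun d => x (c, d)) ⬝ᵥ (fun d => x (c, d)) :=
        Finset.sum_le_sum fun c _ => hB _
    _ = x ⬝ᵥ x := by simp only [dotProduct, Fintype.sum_prod_type]

theorem IsHermitian.kronecker {R n p : Type*} [CommMagma R] [StarMul R] {A : Matrix n n R}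
    {B : Matrix p p R} (hA : A.IsHermitian) (hB : B.IsHermitian) : (A ⊗ₖ B).IsHermitian := by
  rw [IsHermitian, conjTranspose_kronecker, hA.eq, hB.eq]

theorem trace_vecMulVec_mul {R n : Type*} [CommSemiring R] [Fintype n] (a b : n → R)
    (X : Matrix n n R) : trace (vecMulVec a b * X) = b ⬝ᵥ X *ᵥ a := by
  rw [vecMulVec_mul, trace_vecMulVec, dotProduct_comm, dotProduct_mulVec]

theorem dotProduct_submatrix_mulVec_comp_equiv {R m n : Type*} [NonUnitalNonAssocSemiring R]
    [Fintype m] [Fintype n] (u v : m → R) (K : Matrix m m R) (e : n ≃ m) :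
    u ∘ e ⬝ᵥ K.submatrix e e *ᵥ (v ∘ e) = u ⬝ᵥ K *ᵥ v := by
  simp [submatrix_mulVec_equiv, Function.comp_assoc]

theorem dotProduct_kronecker_mulVec {R m n : Type*} [CommSemiring R] [Fintype m] [Fintype n]
    (a c : m → R) (b d : n → R) (A : Matrix m m R) (B : Matrix n n R) :
    (fun p => a p.1 * b p.2) ⬝ᵥ (A ⊗ₖ B) *ᵥ (fun p => c p.1 * d p.2) =
      (a ⬝ᵥ A *ᵥ c) * (b ⬝ᵥ B *ᵥ d) := by
  simp only [dotProduct, mulVec, Fintype.sum_prod_type, kronecker_apply]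
  rw [Finset.sum_mul_sum]
  simp only [Finset.mul_sum, Finset.sum_mul]
  refine Finset.sum_congr rfl fun _ _ => Finset.sum_congr rfl fun _ _ => ?_
  rw [Finset.sum_comm]
  exact Finset.sum_congr rfl fun _ _ => Finset.sum_congr rfl fun _ _ => by ring

theorem re_star_dotProduct_mulVec_sq_le {n : Type*} [Fintype n] [DecidableEq n]
    {H : Matrix n n ℂ} {c : ℝ} (hH : Hᴴ * H = (c : ℂ) • 1) {χ : n → ℂ}
    (hχ : star χ ⬝ᵥ χ = 1) : (star χ ⬝ᵥ H *ᵥ χ).re ^ 2 ≤ c := by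
  set x : EuclideanSpace ℂ n := WithLp.toLp 2 χ
  set y : EuclideanSpace ℂ n := WithLp.toLp 2 (H *ᵥ χ)
  have hxy : inner ℂ x y = star χ ⬝ᵥ H *ᵥ χ := by
    rw [EuclideanSpace.inner_toLp_toLp, dotProduct_comm]
  have hx : ‖x‖ ^ 2 = 1 := by
    rw [@norm_sq_eq_re_inner ℂ, EuclideanSpace.inner_toLp_toLp, dotProduct_comm, hχ]
    simp
  have hy : ‖y‖ ^ 2 = c := by
    rw [@norm_sq_eq_re_inner ℂ, EuclideanSpace.inner_toLp_toLp, dotProduct_comm, star_mulVec,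
      ← dotProduct_mulVec, mulVec_mulVec, hH, smul_mulVec, one_mulVec, dotProduct_smul, hχ]
    simp
  calc (star χ ⬝ᵥ H *ᵥ χ).re ^ 2 ≤ ‖star χ ⬝ᵥ H *ᵥ χ‖ ^ 2 := by
        rw [← sq_abs]
        exact pow_le_pow_left₀ (abs_nonneg _) (Complex.abs_re_le_norm _) 2
    _ ≤ (‖x‖ * ‖y‖) ^ 2 := by
        rw [← hxy]
        exact pow_le_pow_left₀ (norm_nonneg _) (norm_inner_le_norm x y) 2
    _ = c := by rw [mul_pow, hx, hy, one_mul]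

theorem star_dotProduct_self_eq_one {n : Type*} [Fintype n] {χ : n → ℂ}
    (hχ : ∑ x, Complex.normSq (χ x) = 1) : star χ ⬝ᵥ χ = 1 := by
  simp [dotProduct, ← Complex.normSq_eq_conj_mul_self, ← Complex.ofReal_sum, hχ]

end Matrix

def pauliDot (u : Fin 3 → ℝ) : Matrix (Fin 2) (Fin 2) ℂ :=
  ∑ a, (u a : ℂ) • pauli a

theorem pauli_isHermitian (a : Fin 3) : (pauli a).IsHermitian := by
  fin_cases a <;> ext i j <;> fin_cases i <;> fin_cases j <;> simp [pauli]

theorem pauliDot_isHermitian (u : Fin 3 → ℝ) : (pauliDot u).IsHermitian := by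
  ext i j
  fin_cases i <;> fin_cases j <;> simp [pauliDot, pauli, Fin.sum_univ_succ]

theorem pauliDot_mul_self (u : Fin 3 → ℝ) :
    pauliDot u * pauliDot u = ((u ⬝ᵥ u : ℝ) : ℂ) • 1 := by
  ext i j
  fin_cases i <;> fin_cases j <;>
    simp [pauliDot, pauli, mul_apply, Fin.sum_univ_succ, dotProduct] <;>
    ring_nf <;> simp [Complex.I_sq]

theorem pauliDot_kronecker_pauliDot (u v : Fin 3 → ℝ) :
    pauliDot u ⊗ₖ pauliDot v = ∑ a, ∑ b, ((u a * v b : ℝ) : ℂ) • (pauli a ⊗ₖ pauli b) := by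
  ext ⟨i, i'⟩ ⟨j, j'⟩
  simp only [pauliDot, kronecker_apply, Matrix.sum_apply, Matrix.smul_apply, smul_eq_mul,
    Finset.sum_mul_sum]
  push_cast
  exact Finset.sum_congr rfl fun a _ => Finset.sum_congr rfl fun b _ => by ring

def twoQubitCorr (χ : Fin 2 × Fin 2 → ℂ) : Matrix (Fin 3) (Fin 3) ℝ :=
  of fun a b => (star χ ⬝ᵥ (pauli a ⊗ₖ pauli b) *ᵥ χ).re

theorem star_dotProduct_pauli_kronecker_mulVec (χ : Fin 2 × Fin 2 → ℂ) (a b : Fin 3) :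
    star χ ⬝ᵥ (pauli a ⊗ₖ pauli b) *ᵥ χ = twoQubitCorr χ a b :=
  Complex.ext rfl
    (((pauli_isHermitian a).kronecker (pauli_isHermitian b)).im_star_dotProduct_mulVec_self χ)

theorem dotProduct_twoQubitCorr_mulVec (χ : Fin 2 × Fin 2 → ℂ) (u v : Fin 3 → ℝ) :
    u ⬝ᵥ twoQubitCorr χ *ᵥ v = (star χ ⬝ᵥ (pauliDot u ⊗ₖ pauliDot v) *ᵥ χ).re := by
  simp only [pauliDot_kronecker_pauliDot, sum_mulVec, smul_mulVec, dotProduct_sum,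
    dotProduct_smul, smul_eq_mul, Complex.re_sum, Complex.re_ofReal_mul]
  change _ = ∑ a, ∑ b, u a * v b * twoQubitCorr χ a b
  simp only [dotProduct, mulVec, Finset.mul_sum]
  exact Finset.sum_congr rfl fun a _ => Finset.sum_congr rfl fun b _ => by ring

theorem twoQubitCorr_isContraction {χ : Fin 2 × Fin 2 → ℂ} (hχ : star χ ⬝ᵥ χ = 1) :
    (twoQubitCorr χ).IsContraction := by
  refine isContraction_of_sq_le fun u v => ?_
  rw [dotProduct_twoQubitCorr_mulVec]
  refine re_star_dotProduct_mulVec_sq_le ?_ hχ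
  rw [((pauliDot_isHermitian u).kronecker (pauliDot_isHermitian v)).eq, ← mul_kronecker_mul,
    pauliDot_mul_self, pauliDot_mul_self, smul_kronecker, kronecker_smul, one_kronecker_one,
    smul_smul, Complex.ofReal_mul]

def subtypePairArrowEquiv {ι : Type*} [DecidableEq ι] {P : ι → Prop} {a b : ι} (ha : P a)
    (hb : P b) (hab : a ≠ b) (hP : ∀ q, P q → q = a ∨ q = b) (α : Type*) :
    ({q // P q} → α) ≃ α × α where
  toFun r := (r ⟨a, ha⟩, r ⟨b, hb⟩)
  invFun p q := if q.1 = a then p.1 else p.2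
  left_inv r := funext fun ⟨q, hq⟩ => by rcases hP q hq with rfl | rfl <;> simp [hab.symm]
  right_inv p := by simp [hab.symm]

section FourQubits

variable {j l m s : Fin 4}

theorem Fin.eq_or_eq_or_eq_or_eq_of_injective (hinj : Function.Injective ![j, m, l, s])
    (i : Fin 4) : i = j ∨ i = m ∨ i = l ∨ i = s := by
  obtain ⟨k, rfl⟩ := Finite.injective_iff_surjective.mp hinj i
  fin_cases k <;> simp

def pairSplitEquiv (hinj : Function.Injective ![j, m, l, s]) (α : Type*) [Fintype α] :
    (Fin 4 → α) ≃ (α × α) × (α × α) :=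
  Equiv.ofBijective (fun r => ((r j, r m), (r l, r s))) <| by
    refine (Fintype.bijective_iff_injective_and_card _).mpr ⟨fun r r' h => ?_, ?_⟩
    · simp only [Prod.mk.injEq] at h
      funext i
      rcases Fin.eq_or_eq_or_eq_or_eq_of_injective hinj i with rfl | rfl | rfl | rfl <;> tauto
    · simp; ring

@[simp]
theorem pairSplitEquiv_apply (hinj : Function.Injective ![j, m, l, s]) {α : Type*} [Fintype α]
    (r : Fin 4 → α) : pairSplitEquiv hinj α r = ((r j, r m), (r l, r s)) :=
  rfl

theorem tensorOp_eq_submatrix (hinj : Function.Injective ![j, m, l, s])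
    (A : Fin 4 → Matrix (Fin 2) (Fin 2) ℂ) :
    tensorOp A = ((A j ⊗ₖ A m) ⊗ₖ (A l ⊗ₖ A s)).submatrix (pairSplitEquiv hinj _)
      (pairSplitEquiv hinj _) := by
  ext r c
  rw [tensorOp, ← (Finite.injective_iff_bijective.mp hinj).prod_comp, Fin.prod_univ_four]
  simp [mul_assoc]

theorem corr_pure_product (hinj : Function.Injective ![j, m, l, s]) (χ₁ χ₂ : Fin 2 × Fin 2 → ℂ)
    {Ψ : (Fin 4 → Fin 2) → ℂ} (hprod : ∀ r, Ψ r = χ₁ (r j, r m) * χ₂ (r l, r s))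
    (f : Fin 4 → Fin 3) :
    corr (vecMulVec Ψ (star Ψ)) f =
      twoQubitCorr χ₁ (f j) (f m) * twoQubitCorr χ₂ (f l) (f s) := by
  set e := pairSplitEquiv hinj (Fin 2)
  have hΨ : Ψ = (fun p => χ₁ p.1 * χ₂ p.2) ∘ e := funext hprod
  have hstar : star Ψ = (fun p => star χ₁ p.1 * star χ₂ p.2) ∘ e := by
    funext r
    simp [e, hprod]
  rw [corr, trace_vecMulVec_mul, tensorOp_eq_submatrix hinj, hstar, hΨ,
    dotProduct_submatrix_mulVec_comp_equiv, dotProduct_kronecker_mulVec,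
    star_dotProduct_pauli_kronecker_mulVec, star_dotProduct_pauli_kronecker_mulVec]
  norm_cast

theorem exists_matricize_corr_pure_product_eq_submatrix
    (hinj : Function.Injective ![j, m, l, s]) (χ₁ χ₂ : Fin 2 × Fin 2 → ℂ)
    {Ψ : (Fin 4 → Fin 2) → ℂ} (hprod : ∀ r, Ψ r = χ₁ (r j, r m) * χ₂ (r l, r s)) :
    ∃ (eR : ({q // q ∈ ({j, l} : Finset (Fin 4))} → Fin 3) ≃ Fin 3 × Fin 3)
      (eC : ({q // q ∉ ({j, l} : Finset (Fin 4))} → Fin 3) ≃ Fin 3 × Fin 3),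
      matricize {j, l} (corr (vecMulVec Ψ (star Ψ))) =
        (twoQubitCorr χ₁ ⊗ₖ twoQubitCorr χ₂).submatrix eR eC := by
  have hjl : j ≠ l := hinj.ne (show (0 : Fin 4) ≠ 2 by decide)
  have hms : m ≠ s := hinj.ne (show (1 : Fin 4) ≠ 3 by decide)
  have hmj : m ≠ j := hinj.ne (show (1 : Fin 4) ≠ 0 by decide)
  have hml : m ≠ l := hinj.ne (show (1 : Fin 4) ≠ 2 by decide)
  have hsj : s ≠ j := hinj.ne (show (3 : Fin 4) ≠ 0 by decide)
  have hsl : s ≠ l := hinj.ne (show (3 : Fin 4) ≠ 2 by decide)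
  have hcompl : ∀ q, q ∉ ({j, l} : Finset (Fin 4)) → q = m ∨ q = s := fun q hq => by
    simp only [Finset.mem_insert, Finset.mem_singleton] at hq
    have := Fin.eq_or_eq_or_eq_or_eq_of_injective hinj q
    tauto
  refine ⟨subtypePairArrowEquiv (P := (· ∈ ({j, l} : Finset (Fin 4)))) (by simp) (by simp) hjl
      (by simp) _,
    subtypePairArrowEquiv (P := (· ∉ ({j, l} : Finset (Fin 4)))) (by simp [hmj, hml])
      (by simp [hsj, hsl]) hms hcompl _, ?_⟩
  ext r c
  simp [matricize, corr_pure_product hinj χ₁ χ₂ hprod, subtypePairArrowEquiv, hmj, hml, hsj, hsl]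

end FourQubits

/-- If a pure 4-qubit state is a product across the 2-versus-2
bipartition `{j,m} | {l,s}` (with `j,l,m,s` the four distinct subsystems, up to
reordering of factors), then the crossing `{j,l}`-matricization of the full
correlation tensor satisfies `‖T_{{j,l}̲}‖_k ≤ k` for every `k ∈ {1,…,9}`. -/
theorem crossing_two_vs_two_product_four_qubit_matricization_bound
    (j l m s : Fin 4)
    (hjl : j ≠ l) (hjm : j ≠ m) (hjs : j ≠ s)
    (hlm : l ≠ m) (hls : l ≠ s) (hms : m ≠ s)
    (χ₁ χ₂ : Fin 2 × Fin 2 → ℂ)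
    (hχ₁ : ∑ x, Complex.normSq (χ₁ x) = 1)
    (hχ₂ : ∑ x, Complex.normSq (χ₂ x) = 1)
    (Ψ : (Fin 4 → Fin 2) → ℂ)
    (hprod : ∀ r, Ψ r = χ₁ (r j, r m) * χ₂ (r l, r s))
    (ρ : Matrix (Fin 4 → Fin 2) (Fin 4 → Fin 2) ℂ)
    (hρ : ρ = Matrix.vecMulVec Ψ (star Ψ)) :
    ∀ k : ℕ, 1 ≤ k → k ≤ 9 →
      kyFanNorm k (matricize {j, l} (corr ρ)) ≤ k := by
  intro k _ _
  have hinj : Function.Injective ![j, m, l, s] := by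
    intro a b h
    fin_cases a <;> fin_cases b <;> simp_all [eq_comm]
  obtain ⟨eR, eC, hT⟩ := exists_matricize_corr_pure_product_eq_submatrix hinj χ₁ χ₂ hprod
  have hT₁ := twoQubitCorr_isContraction (star_dotProduct_self_eq_one hχ₁)
  have hT₂ := twoQubitCorr_isContraction (star_dotProduct_self_eq_one hχ₂)
  rw [hρ, hT]
  exact ((hT₁.kronecker hT₂).submatrix eR eC).kyFanNorm_le k
end
end
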